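/- arXiv:0801.4557 — 6 statements merged into one kernel-verified Lean document; each statement's English description precedes it below -/
import Mathlib

section
/- For α ∈ (0,1), the series ∑_{k≥1} a_k with a_k := (-1)^(k-1) * binomial(α,k) converges and its sum equals 1. -/
/-- The generalized binomial coefficient `binomial α k = α(α-1)⋯(α-(k-1))/k!`. -/
noncomputable def genBinom (α : ℝ) (k : ℕ) : ℝ :=
  (∏ j ∈ Finset.range k, (α - j)) / (Nat.factorial k)

/-- `a_k = (-1)^(k-1) * binomial(α,k)`. -/
noncomputable def aCoeff (α : ℝ) (k : ℕ) : ℝ := (-1 : ℝ) ^ (k - 1) * genBinom α k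

/-!
Writing `r n = ∏_{j<n} (1 - α/(j+1))`, the ratio `a_{n+2}/a_{n+1} = (n+1-α)/(n+2)` gives
`a_{n+1} = r n * α/(n+1) = r n - r (n+1)`, so the partial sums telescope to `1 - r n`.
For `0 < α ≤ 1` the factors of `r n` lie in `[0,1]` and `r n ≤ exp (-α H_n) → 0`, since the
harmonic series diverges; and the terms `a_{n+1}` are nonnegative.
-/

open Finset Filter Topology

theorem tendsto_prod_range_one_sub_zero {f : ℕ → ℝ} (hf_le : ∀ j, f j ≤ 1)
    (hf : Tendsto (fun n ↦ ∑ j ∈ range n, f j) atTop atTop) :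
    Tendsto (fun n ↦ ∏ j ∈ range n, (1 - f j)) atTop (𝓝 0) := by
  have hle (n : ℕ) : ∏ j ∈ range n, (1 - f j) ≤ Real.exp (-∑ j ∈ range n, f j) := by
    rw [← sum_neg_distrib, Real.exp_sum]
    exact prod_le_prod (fun j _ ↦ sub_nonneg.2 (hf_le j)) fun j _ ↦ Real.one_sub_le_exp_neg _
  exact squeeze_zero (fun n ↦ prod_nonneg fun j _ ↦ sub_nonneg.2 (hf_le j)) hle
    (Real.tendsto_exp_atBot.comp (tendsto_neg_atTop_atBot.comp hf))

theorem genBinom_succ (α : ℝ) (k : ℕ) :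
    genBinom α (k + 1) = genBinom α k * ((α - k) / (k + 1)) := by
  rw [genBinom, genBinom, prod_range_succ, Nat.factorial_succ]
  push_cast
  field_simp

theorem aCoeff_add_two (α : ℝ) (k : ℕ) :
    aCoeff α (k + 2) = aCoeff α (k + 1) * ((k + 1 - α) / (k + 2)) := by
  change (-1 : ℝ) ^ (k + 1) * genBinom α (k + 1 + 1) = (-1) ^ k * genBinom α (k + 1) * _
  rw [genBinom_succ, pow_succ]
  push_cast
  ring

theorem aCoeff_succ_eq_prod (α : ℝ) (n : ℕ) :
    aCoeff α (n + 1) = (∏ j ∈ range n, (1 - α / (j + 1))) * (α / (n + 1)) := by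
  induction n with
  | zero => simp [aCoeff, genBinom]
  | succ n ih =>
    rw [aCoeff_add_two, ih, prod_range_succ]
    push_cast
    field_simp
    ring

theorem sum_range_aCoeff_succ (α : ℝ) (n : ℕ) :
    ∑ k ∈ range n, aCoeff α (k + 1) = 1 - ∏ j ∈ range n, (1 - α / (j + 1)) := by
  have htelescope (k : ℕ) : aCoeff α (k + 1) = ∏ j ∈ range k, (1 - α / (j + 1))
      - ∏ j ∈ range (k + 1), (1 - α / (j + 1)) := by
    rw [aCoeff_succ_eq_prod, prod_range_succ]
    ring
  simp only [htelescope, sum_range_sub', prod_range_zero]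

theorem div_natCast_add_one_mem_Icc {α : ℝ} (hα : α ∈ Set.Icc (0 : ℝ) 1) (j : ℕ) :
    α / (j + 1) ∈ Set.Icc (0 : ℝ) 1 :=
  ⟨div_nonneg hα.1 (by positivity),
    div_le_one_of_le₀ (hα.2.trans (by simp)) (by positivity)⟩

theorem aCoeff_succ_nonneg {α : ℝ} (hα : α ∈ Set.Icc (0 : ℝ) 1) (n : ℕ) :
    0 ≤ aCoeff α (n + 1) := by
  rw [aCoeff_succ_eq_prod]
  exact mul_nonneg (prod_nonneg fun j _ ↦ sub_nonneg.2 (div_natCast_add_one_mem_Icc hα j).2)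
    (div_natCast_add_one_mem_Icc hα n).1

/-- for `α ∈ (0,1)`, `∑_{k≥1} a_k = 1` (the series converges with sum 1). -/
theorem aCoeff_hasSum_one (α : ℝ) (hα : α ∈ Set.Ioo (0 : ℝ) 1) :
    HasSum (fun k : ℕ => aCoeff α (k + 1)) 1 := by
  have hαIcc : α ∈ Set.Icc (0 : ℝ) 1 := Set.Ioo_subset_Icc_self hα
  rw [hasSum_iff_tendsto_nat_of_nonneg (aCoeff_succ_nonneg hαIcc)]
  simp only [sum_range_aCoeff_succ]
  have hharmonic : Tendsto (fun n ↦ ∑ j ∈ range n, α / (j + 1 : ℝ)) atTop atTop := by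
    simp only [div_eq_mul_one_div α, ← mul_sum]
    exact Real.tendsto_sum_range_one_div_nat_succ_atTop.const_mul_atTop hα.1
  simpa using (tendsto_prod_range_one_sub_zero
    (fun j ↦ (div_natCast_add_one_mem_Icc hαIcc j).2) hharmonic).const_sub 1
end

section
/- Let T be a power-bounded operator on a complex Banach space X and F : ℤ≥0 → ℂ absolutely summable. Then the spectrum of Ψ(F;T) := ∑_{k≥0} F(k)T^k equals φ_F(σ(T)), where φ_F(w) := ∑_{k≥0} F(k)w^k for |w| ≤ 1. -/
/-!
The bicommutant `B` of `{T}` is a closed commutative subalgebra containing `T`, and it is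
inverse-closed (the inverse of an element commuting with a set commutes with it too), so the
spectrum of any element of `B` is the same in `B` as among all operators. Power-boundedness makes
`∑ F(k) • T^k` converge absolutely, hence in the closed subalgebra `B`, and in the commutative
Banach algebra `B` Gelfand theory gives `σ(b) = {φ b | φ a character}`. Characters are continuous
algebra homomorphisms, so `φ (∑ F(k) • T^k) = ∑ F(k) (φ T)^k = φ_F (φ T)`.
-/

open WeakDual

theorem Subalgebra.spectrum_centralizer_eq {R A : Type*} [CommRing R] [Ring A] [Algebra R A]
    (s : Set A) (a : centralizer R s) : spectrum R a = spectrum R (a : A) := by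
  refine Set.Subset.antisymm (fun z hz => ?_) (spectrum.subset_subalgebra a)
  rw [spectrum.mem_iff] at hz ⊢
  contrapose! hz
  obtain ⟨u, hu⟩ := hz
  have hu_mem : (u : A) ∈ centralizer R s := by
    rw [hu]; exact sub_mem (algebraMap_mem _ z) a.2
  have hu_inv_mem : (↑u⁻¹ : A) ∈ centralizer R s := fun g hg =>
    (Commute.units_inv_right (hu_mem g hg)).eq
  refine ⟨⟨⟨u, hu_mem⟩, ⟨_, hu_inv_mem⟩, ?_, ?_⟩, ?_⟩
  · ext; simp only [MulMemClass.mk_mul_mk, Units.mul_inv, OneMemClass.coe_one]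
  · ext; simp only [MulMemClass.mk_mul_mk, Units.inv_mul, OneMemClass.coe_one]
  · ext; simp only [hu, AddSubgroupClass.coe_sub, SubalgebraClass.coe_algebraMap]

theorem Summable.subtype_mk_of_isClosed {ι A S : Type*} [AddCommMonoid A] [TopologicalSpace A]
    [T2Space A] [SetLike S A] [AddSubmonoidClass S A] {B : S} (hB : IsClosed (B : Set A))
    {f : ι → A} (hf : Summable f) (hfB : ∀ i, f i ∈ B) :
    Summable fun i => (⟨f i, hfB i⟩ : B) := by
  rw [Topology.IsInducing.subtypeVal.summable_iff_tsum_comp_mem_range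
    (g := AddSubmonoidClass.subtype B)]
  refine ⟨hf, ?_⟩
  simp only [AddSubmonoidClass.coe_subtype, Subtype.range_coe_subtype, SetLike.setOfPred_mem_eq,
    AddSubmonoidClass.subtype_apply, SetLike.mem_coe]
  exact hB.mem_of_tendsto hf.hasSum (.of_forall fun s => sum_mem fun i _ => hfB i)

section Bicommutant

variable {R A : Type*} [CommRing R] [NormedRing A] [Algebra R A] (a : A)

noncomputable instance : NormedCommRing (Subalgebra.centralizer R (Set.centralizer {a})) where
  __ := Subalgebra.normedRing _
  mul_comm x y := Subtype.ext <|
    Set.centralizer_centralizer_comm_of_comm (S := {a}) (by simp) x x.2 y y.2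

instance [CompleteSpace A] : CompleteSpace (Subalgebra.centralizer R (Set.centralizer {a})) :=
  (Set.isClosed_centralizer _).completeSpace_coe

end Bicommutant

namespace spectrum

theorem map_tsum_smul_pow_of_commRing {A : Type*} [NormedCommRing A] [NormedAlgebra ℂ A]
    [CompleteSpace A]
    (a : A) (F : ℕ → ℂ) (hF : Summable fun k => F k • a ^ k) :
    spectrum ℂ (∑' k, F k • a ^ k) = (fun z => ∑' k, F k * z ^ k) '' spectrum ℂ a := by
  have hφ (φ : characterSpace ℂ A) : φ (∑' k, F k • a ^ k) = ∑' k, F k * φ a ^ k := by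
    simpa using hF.map_tsum φ (map_continuous φ)
  ext z
  simp only [CharacterSpace.mem_spectrum_iff_exists, Set.mem_image, exists_exists_eq_and, hφ]

theorem map_tsum_smul_pow {A : Type*} [NormedRing A] [NormedAlgebra ℂ A] [CompleteSpace A]
    (a : A) (F : ℕ → ℂ) (hF : Summable fun k => F k • a ^ k) :
    spectrum ℂ (∑' k, F k • a ^ k) = (fun z => ∑' k, F k * z ^ k) '' spectrum ℂ a := by
  let B := Subalgebra.centralizer ℂ (Set.centralizer {a})
  have hB : IsClosed (B : Set A) := Set.isClosed_centralizer _
  let b : B := ⟨a, Set.subset_centralizer_centralizer rfl⟩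
  have hb : Summable fun k => F k • b ^ k :=
    hF.subtype_mk_of_isClosed hB fun k => (F k • b ^ k).2
  have hcoe : ((∑' k, F k • b ^ k : B) : A) = ∑' k, F k • a ^ k :=
    hB.isClosedEmbedding_subtypeVal.map_tsum (g := B.val) _
  rw [← hcoe, ← Subalgebra.spectrum_centralizer_eq, ← Subalgebra.spectrum_centralizer_eq _ b]
  exact map_tsum_smul_pow_of_commRing b F hb

end spectrum

theorem psi_spectral_mapping_general
    {X : Type*} [NormedAddCommGroup X] [NormedSpace ℂ X] [CompleteSpace X]
    (T : X →L[ℂ] X) (hT : ∃ C : ℝ, ∀ n : ℕ, ‖T ^ n‖ ≤ C)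
    (F : ℕ → ℂ) (hF : Summable fun k => ‖F k‖) :
    spectrum ℂ (∑' k : ℕ, F k • T ^ k) =
      (fun z : ℂ => ∑' k : ℕ, F k * z ^ k) '' spectrum ℂ T := by
  obtain ⟨C, hC⟩ := hT
  refine spectrum.map_tsum_smul_pow T F (.of_norm_bounded (hF.mul_right C) fun k => ?_)
  calc ‖F k • T ^ k‖ ≤ ‖F k‖ * ‖T ^ k‖ := ContinuousLinearMap.opNorm_smul_le _ _
    _ ≤ ‖F k‖ * C := by gcongr; exact hC k

/-- spectral mapping theorem for subordination: if `T` is power-bounded and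
`F` absolutely summable, then `σ(Ψ(F;T)) = φ_F(σ(T))` where `φ_F(w) = ∑_k F(k) w^k`. -/
theorem psi_spectral_mapping
    {X : Type*} [NormedAddCommGroup X] [NormedSpace ℂ X] [CompleteSpace X] [Nontrivial X]
    (T : X →L[ℂ] X) (hT : ∃ C : ℝ, ∀ n : ℕ, ‖T ^ n‖ ≤ C)
    (F : ℕ → ℂ) (hF : Summable fun k => ‖F k‖) :
    spectrum ℂ (∑' k : ℕ, F k • T ^ k) =
      (fun z : ℂ => ∑' k : ℕ, F k * z ^ k) '' spectrum ℂ T :=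
  psi_spectral_mapping_general T hT F hF
end

section
/- If S₁, S₂ are commuting bounded operators on a complex Banach space, then the Hausdorff distance between σ(S₁) and σ(S₂) is at most ‖S₁ - S₂‖. -/
/-!
If `z ∈ σ(a)` were at distance `d > ‖a - b‖` from `σ(b)`, then `u = z - b` is invertible and
`σ(u⁻¹) = σ(u)⁻¹` lies in the closed disc of radius `1 / d`. Gelfand's formula makes the spectral
radius submultiplicative on commuting elements, and `a - b` commutes with `u`, so
`ρ(u⁻¹ (a - b)) ≤ ‖a - b‖ / d < 1`. Hence `z - a = u (1 - u⁻¹ (a - b))` is invertible,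
contradicting `z ∈ σ(a)`.
-/

open Metric

namespace spectrum

theorem spectralRadius_units_inv_le {𝕜 A : Type*} [NormedField 𝕜] [Ring A] [Algebra 𝕜 A]
    {u : Aˣ} {d : ℝ} (hd : 0 < d) (h : ∀ z ∈ spectrum 𝕜 (u : A), d ≤ ‖z‖) :
    spectralRadius 𝕜 (↑u⁻¹ : A) ≤ ENNReal.ofReal d⁻¹ := by
  refine iSup₂_le fun z hz => ?_
  have hdz : d ≤ ‖z‖⁻¹ := norm_inv z ▸ h _ (inv₀_mem_iff.mpr hz)
  have hz : 0 < ‖z‖ := inv_pos.mp (hd.trans_le hdz)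
  rw [← ENNReal.ofReal_coe_nnreal, coe_nnnorm]
  exact ENNReal.ofReal_le_ofReal ((le_inv_comm₀ hd hz).mp hdz)

theorem spectralRadius_lt_top {𝕜 A : Type*} [NormedField 𝕜] [NormedRing A] [NormedAlgebra 𝕜 A]
    [CompleteSpace A] (a : A) : spectralRadius 𝕜 a < ⊤ := by
  refine (iSup₂_le fun k hk => ?_).trans_lt (ENNReal.coe_lt_top (r := ‖a‖₊ * ‖(1 : A)‖₊))
  exact_mod_cast norm_le_norm_mul_of_mem hk

end spectrum

section Complex

variable {A : Type*} [NormedRing A] [NormedAlgebra ℂ A] [CompleteSpace A]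

theorem Commute.spectralRadius_mul_le {a b : A} (h : Commute a b) :
    spectralRadius ℂ (a * b) ≤ spectralRadius ℂ a * spectralRadius ℂ b := by
  have hfin (c : A) : spectralRadius ℂ c ≠ ⊤ := (spectrum.spectralRadius_lt_top c).ne
  refine le_of_tendsto_of_tendsto'
    (spectrum.pow_nnnorm_pow_one_div_tendsto_nhds_spectralRadius (a * b))
    (ENNReal.Tendsto.mul (spectrum.pow_nnnorm_pow_one_div_tendsto_nhds_spectralRadius a)
      (.inr (hfin b)) (spectrum.pow_nnnorm_pow_one_div_tendsto_nhds_spectralRadius b)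
      (.inr (hfin a))) fun n => ?_
  rw [← ENNReal.mul_rpow_of_nonneg _ _ (by positivity), ← ENNReal.coe_mul, h.mul_pow]
  gcongr
  exact nnnorm_mul_le _ _

theorem Commute.isUnit_sub_of_spectralRadius_lt {u : Aˣ} {c : A} (hc : Commute (u : A) c)
    (h : spectralRadius ℂ (↑u⁻¹ : A) * spectralRadius ℂ c < 1) : IsUnit ((u : A) - c) := by
  have hsmall : spectralRadius ℂ (↑u⁻¹ * c) < ‖(1 : ℂ)‖₊ := by
    rw [nnnorm_one, ENNReal.coe_one]
    exact hc.units_inv_left.spectralRadius_mul_le.trans_lt h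
  have hunit := spectrum.mem_resolventSet_iff.mp
    (spectrum.mem_resolventSet_of_spectralRadius_lt hsmall)
  rw [map_one] at hunit
  convert u.isUnit.mul hunit using 1
  rw [mul_sub, mul_one, Units.mul_inv_cancel_left]

theorem Commute.infDist_spectrum_le_norm_sub [NormOneClass A] {a b : A} (h : Commute a b)
    {z : ℂ} (hz : z ∈ spectrum ℂ a) : infDist z (spectrum ℂ b) ≤ ‖a - b‖ := by
  by_contra! hlt
  set d := infDist z (spectrum ℂ b)
  have hd : 0 < d := (norm_nonneg _).trans_lt hlt
  have hzb : z ∉ spectrum ℂ b := fun hzb => hd.ne' (infDist_zero_of_mem hzb)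
  obtain ⟨u, hu⟩ := spectrum.notMem_iff.mp hzb
  have hinv : spectralRadius ℂ (↑u⁻¹ : A) ≤ ENNReal.ofReal d⁻¹ := by
    refine spectrum.spectralRadius_units_inv_le hd fun w hw => ?_
    rw [hu, ← spectrum.singleton_sub_eq] at hw
    obtain ⟨_, rfl, μ, hμ, rfl⟩ := hw
    exact (infDist_le_dist_of_mem hμ).trans_eq (dist_eq_norm _ _)
  have hsmall : spectralRadius ℂ (↑u⁻¹ : A) * spectralRadius ℂ (a - b) < 1 := calc
    _ ≤ ENNReal.ofReal d⁻¹ * ENNReal.ofReal ‖a - b‖ := by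
      rw [ofReal_norm]
      exact mul_le_mul' hinv (spectrum.spectralRadius_le_nnnorm _)
    _ = ENNReal.ofReal (‖a - b‖ / d) := by
      rw [← ENNReal.ofReal_mul (by positivity), inv_mul_eq_div]
    _ < 1 := ENNReal.ofReal_lt_one.mpr ((div_lt_one hd).mpr hlt)
  have hcomm : Commute (u : A) (a - b) := by
    rw [hu]
    exact (Algebra.commute_algebraMap_left z (a - b)).sub_left (h.symm.sub_right (.refl b))
  have hunit := hcomm.isUnit_sub_of_spectralRadius_lt hsmall
  rw [hu, sub_sub_sub_cancel_right] at hunit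
  exact spectrum.notMem_iff.mpr hunit hz

theorem Commute.hausdorffDist_spectrum_le_norm_sub [NormOneClass A] {a b : A}
    (h : Commute a b) : hausdorffDist (spectrum ℂ a) (spectrum ℂ b) ≤ ‖a - b‖ :=
  hausdorffDist_le_of_infDist (norm_nonneg _) (fun _ hz => h.infDist_spectrum_le_norm_sub hz)
    fun _ hz => norm_sub_rev a b ▸ h.symm.infDist_spectrum_le_norm_sub hz

end Complex

/-- for commuting bounded operators `S₁, S₂` on a complex Banach space, the
Hausdorff distance between their spectra is at most `‖S₁ - S₂‖`. -/
theorem spectrum_hausdorffDist_le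
    {X : Type*} [NormedAddCommGroup X] [NormedSpace ℂ X] [CompleteSpace X]
    (S₁ S₂ : X →L[ℂ] X) (hcomm : Commute S₁ S₂) :
    Metric.hausdorffDist (spectrum ℂ S₁) (spectrum ℂ S₂) ≤ ‖S₁ - S₂‖ := by
  -- `X →L[ℂ] X` is a `NormOneClass` only for nontrivial `X`.
  rcases subsingleton_or_nontrivial X with hX | hX
  · rw [Subsingleton.elim S₁ S₂, hausdorffDist_self_zero]
    exact norm_nonneg _
  · exact hcomm.hausdorffDist_spectrum_le_norm_sub
end

section
/- With F(k) = 1/(k(k-1)) for k ≥ 2 and F(0)=F(1)=0, the argument of 1 - F̂(ξ) satisfies lim_{ξ→0} |Arg(1 - F̂(ξ))| = π/2, where F̂(ξ) = ∑_{k≥2} e^{-ikξ}/(k(k-1)). -/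
open Real Filter

/-- The Fourier transform `F̂(ξ) = ∑_{k≥2} e^{-ikξ}/(k(k-1))` of the probability
`F(k) = 1/(k(k-1))`, `k ≥ 2`. -/
noncomputable def logProbFourier (ξ : ℝ) : ℂ :=
  ∑' k : ℕ, Complex.exp (-Complex.I * (k + 2) * ξ) / ((k + 2) * (k + 1))

/-!
Writing `z = e^{-iξ}` and `u = 1 - z`, the partial fractions `1/(k(k-1)) = 1/(k-1) - 1/k` and
the series of `-log (1 - z)` give `1 - F̂(ξ) = u (1 - log u)`, first for `|z| < 1` and then on
the unit circle away from `z = 1` by continuity of the (absolutely convergent) series.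
As `ξ → 0`, `u → 0` along a direction that becomes vertical (`Re u / |u| = |u| / 2`), while
`1 - log u` has real part `1 - log |u| → ∞` and imaginary part `-arg u ∈ [-π, π]`, so its
direction becomes horizontal. Hence `cos (arg (1 - F̂(ξ))) → 0`.
-/

open Complex Topology

noncomputable def logProbGenFun (z : ℂ) : ℂ :=
  ∑' k : ℕ, z ^ (k + 2) / ((k + 2) * (k + 1))

lemma logProbFourier_eq_genFun (ξ : ℝ) :
    logProbFourier ξ = logProbGenFun (cexp (-I * ξ)) := by
  unfold logProbFourier logProbGenFun
  congr 1 with k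
  rw [← Complex.exp_nat_mul]
  push_cast
  congr 2
  ring

lemma summable_one_div_add_two_mul_add_one :
    Summable fun k : ℕ => 1 / (((k : ℝ) + 2) * ((k : ℝ) + 1)) := by
  refine ((Real.summable_one_div_nat_add_rpow 1 2).mpr one_lt_two).of_nonneg_of_le
    (fun k => by positivity) fun k => ?_
  rw [abs_of_pos (by positivity), Real.rpow_two]
  gcongr
  linarith

lemma logProbGenFun_eq_of_norm_lt_one {z : ℂ} (hz : ‖z‖ < 1) :
    logProbGenFun z = z + (1 - z) * Complex.log (1 - z) := by
  have h₁ := hasSum_taylorSeries_neg_log' hz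
  have h₂ : HasSum (fun n : ℕ => z ^ (n + 2) / (n + 2)) (-Complex.log (1 - z) - z) := by
    simpa [add_assoc, one_add_one_eq_two] using (hasSum_nat_add_iff' 1).mpr h₁
  calc logProbGenFun z = ∑' n : ℕ, (z * (z ^ (n + 1) / (n + 1)) - z ^ (n + 2) / (n + 2)) := by
        unfold logProbGenFun
        congr 1 with n
        have : (n : ℂ) + 1 ≠ 0 := by norm_cast
        have : (n : ℂ) + 2 ≠ 0 := by norm_cast
        field_simp
        ring
    _ = z * -Complex.log (1 - z) - (-Complex.log (1 - z) - z) :=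
        ((h₁.mul_left z).sub h₂).tsum_eq
    _ = z + (1 - z) * Complex.log (1 - z) := by ring

lemma continuousOn_logProbGenFun : ContinuousOn logProbGenFun (Metric.closedBall 0 1) := by
  refine continuousOn_tsum (fun k => by fun_prop) summable_one_div_add_two_mul_add_one
    fun k z hz => ?_
  rw [mem_closedBall_zero_iff] at hz
  have : ((k : ℂ) + 2) * ((k : ℂ) + 1) = (((k + 2) * (k + 1) : ℝ) : ℂ) := by push_cast; ring
  rw [norm_div, norm_pow, this, Complex.norm_of_nonneg (by positivity)]
  gcongr
  exact pow_le_one₀ (norm_nonneg _) hz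

lemma logProbGenFun_eq {z : ℂ} (hz : ‖z‖ ≤ 1) (hz₁ : 1 - z ∈ slitPlane) :
    logProbGenFun z = z + (1 - z) * Complex.log (1 - z) := by
  have hcl : z ∈ closure (Metric.ball (0 : ℂ) 1) := by
    rwa [closure_ball 0 one_ne_zero, mem_closedBall_zero_iff]
  have := mem_closure_iff_nhdsWithin_neBot.mp hcl
  have hcont : ContinuousAt (fun w => w + (1 - w) * Complex.log (1 - w)) z := by
    fun_prop (disch := exact hz₁)
  refine tendsto_nhds_unique
    ((continuousOn_logProbGenFun z (mem_closedBall_zero_iff.2 hz)).mono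
      Metric.ball_subset_closedBall)
    (hcont.continuousWithinAt.tendsto.congr' ?_)
  filter_upwards [self_mem_nhdsWithin] with w hw
  exact (logProbGenFun_eq_of_norm_lt_one (mem_ball_zero_iff.1 hw)).symm

lemma norm_one_sub_sq_of_norm_eq_one {z : ℂ} (hz : ‖z‖ = 1) :
    ‖1 - z‖ ^ 2 = 2 * (1 - z).re := by
  have := congrArg (· ^ 2) hz
  simp only [Complex.sq_norm, normSq_apply] at this ⊢
  simp only [sub_re, one_re, sub_im, one_im]
  nlinarith

lemma re_div_norm_one_sub_of_norm_eq_one {z : ℂ} (hz : ‖z‖ = 1) :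
    (1 - z).re / ‖1 - z‖ = ‖1 - z‖ / 2 := by
  have h := norm_one_sub_sq_of_norm_eq_one hz
  rcases eq_or_ne ‖1 - z‖ 0 with h₀ | h₀
  · simp [h₀]
  · rw [div_eq_div_iff h₀ two_ne_zero]
    linarith

lemma abs_re_mul_div_norm_le (u v : ℂ) :
    |(u * v).re| / ‖u * v‖ ≤ |u.re| / ‖u‖ + |v.im| / ‖v‖ := by
  rcases eq_or_ne u 0 with rfl | hu
  · simp only [zero_mul, zero_re, abs_zero, norm_zero, div_zero, zero_add]
    positivity
  rcases eq_or_ne v 0 with rfl | hv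
  · simp only [mul_zero, zero_re, abs_zero, norm_zero, div_zero, zero_im, add_zero]
    positivity
  rw [div_add_div _ _ (norm_ne_zero_iff.2 hu) (norm_ne_zero_iff.2 hv), norm_mul]
  gcongr
  calc |(u * v).re| ≤ |u.re| * |v.re| + |u.im| * |v.im| := by
        rw [mul_re, ← abs_mul, ← abs_mul]; exact abs_sub _ _
    _ ≤ |u.re| * ‖v‖ + ‖u‖ * |v.im| := by
        gcongr
        exacts [abs_re_le_norm v, abs_im_le_norm u]

lemma tendsto_norm_one_sub_log :
    Tendsto (fun z : ℂ => ‖1 - Complex.log z‖) (𝓝[≠] 0) atTop := by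
  have h : Tendsto (fun z : ℂ => 1 - Real.log ‖z‖) (𝓝[≠] 0) atTop :=
    tendsto_atTop_add_const_left _ 1 <| tendsto_neg_atBot_atTop.comp <|
      Real.tendsto_log_nhdsGT_zero.comp tendsto_norm_nhdsNE_zero
  refine tendsto_atTop_mono (fun z => ?_) h
  simpa [log_re] using re_le_norm (1 - Complex.log z)

lemma tendsto_abs_arg_of_re_div_norm {α : Type*} {l : Filter α} {w : α → ℂ}
    (hw : ∀ᶠ a in l, w a ≠ 0) (h : Tendsto (fun a => (w a).re / ‖w a‖) l (𝓝 0)) :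
    Tendsto (fun a => |arg (w a)|) l (𝓝 (π / 2)) := by
  have := (Real.continuous_arccos.tendsto 0).comp h
  rw [Real.arccos_zero] at this
  refine this.congr' ?_
  filter_upwards [hw] with a ha
  rw [Function.comp_apply, ← cos_arg ha, ← Real.cos_abs,
    Real.arccos_cos (abs_nonneg _) (abs_arg_le_pi _)]

lemma tendsto_abs_arg_mul_one_sub_log {α : Type*} {l : Filter α} {u : α → ℂ}
    (hu : Tendsto u l (𝓝[≠] 0)) (hre : Tendsto (fun a => (u a).re / ‖u a‖) l (𝓝 0)) :
    Tendsto (fun a => |arg (u a * (1 - Complex.log (u a)))|) l (𝓝 (π / 2)) := by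
  have hv := tendsto_norm_one_sub_log.comp hu
  refine tendsto_abs_arg_of_re_div_norm ?_ ?_
  · filter_upwards [hu eventually_mem_nhdsWithin, hv.eventually_gt_atTop 0] with a ha hv
    exact mul_ne_zero ha (norm_pos_iff.1 hv)
  · have hbound :
        Tendsto (fun a => |(u a).re / ‖u a‖| + π / ‖1 - Complex.log (u a)‖) l (𝓝 0) := by
      simpa using hre.abs.add (tendsto_const_nhds.div_atTop hv)
    refine squeeze_zero_norm' (Eventually.of_forall fun a => ?_) hbound
    rw [Real.norm_eq_abs, abs_div, abs_norm, abs_div, abs_norm]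
    refine (abs_re_mul_div_norm_le _ _).trans (add_le_add_right ?_ _)
    gcongr
    simpa [log_im] using abs_arg_le_pi (u a)

lemma eventually_re_one_sub_exp_pos :
    ∀ᶠ ξ : ℝ in 𝓝[≠] 0, 0 < (1 - cexp (-I * ξ)).re := by
  have hball : ∀ᶠ ξ : ℝ in 𝓝[≠] 0, ξ ∈ Set.Ioo (-(2 * π)) (2 * π) :=
    nhdsWithin_le_nhds (Ioo_mem_nhds (by linarith [pi_pos]) (by linarith [pi_pos]))
  filter_upwards [self_mem_nhdsWithin, hball] with ξ hξ₀ hξ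
  have : Real.cos ξ ≠ 1 := fun h => hξ₀ ((Real.cos_eq_one_iff_of_lt_of_lt hξ.1 hξ.2).1 h)
  simpa [exp_re] using lt_of_le_of_ne (Real.cos_le_one ξ) this

/-- for `F(k) = 1/(k(k-1))`, `k ≥ 2`, one has
`lim_{ξ→0} |Arg(1 - F̂(ξ))| = π/2`. -/
theorem logProb_arg_limit :
    Tendsto (fun ξ : ℝ => |Complex.arg (1 - logProbFourier ξ)|)
      (nhdsWithin 0 {0}ᶜ) (nhds (π / 2)) := by
  have hnorm (ξ : ℝ) : ‖cexp (-I * ξ)‖ = 1 := by simp [norm_exp]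
  have hu₀ : Tendsto (fun ξ : ℝ => 1 - cexp (-I * ξ)) (𝓝 0) (𝓝 0) := by
    have : Continuous fun ξ : ℝ => 1 - cexp (-I * ξ) := by fun_prop
    simpa using this.tendsto 0
  have hu : Tendsto (fun ξ : ℝ => 1 - cexp (-I * ξ)) (𝓝[≠] 0) (𝓝[≠] 0) :=
    tendsto_nhdsWithin_iff.2 ⟨hu₀.mono_left nhdsWithin_le_nhds,
      eventually_re_one_sub_exp_pos.mono fun ξ h => ne_of_apply_ne re (by simpa using h.ne')⟩
  have hre :
      Tendsto (fun ξ : ℝ => (1 - cexp (-I * ξ)).re / ‖1 - cexp (-I * ξ)‖) (𝓝[≠] 0) (𝓝 0) := by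
    simp_rw [re_div_norm_one_sub_of_norm_eq_one (hnorm _)]
    simpa using (hu₀.norm.div_const 2).mono_left nhdsWithin_le_nhds
  refine (tendsto_abs_arg_mul_one_sub_log hu hre).congr' ?_
  filter_upwards [eventually_re_one_sub_exp_pos] with ξ hξ
  rw [logProbFourier_eq_genFun, logProbGenFun_eq (hnorm ξ).le (mem_slitPlane_iff.2 (.inl hξ))]
  congr 2
  ring
end

section
/- Let T be a bounded operator on a complex Banach space satisfying the Kreiss resolvent condition ‖(λI - T)^{-1}‖ ≤ c(|λ|-1)^{-1} for all |λ| > 1. Then ‖(μI + (I-T))^{-1}‖ ≤ c (Re μ)^{-1} for all μ with Re μ > 0; in particular I - T is a sectorial operator of type π/2. -/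
/-!
Since `μ + (1 - T) = (μ + 1) - T` and `‖μ + 1‖ - 1 ≥ Re μ`, the Kreiss bound at `λ = μ + 1`
is the half-plane bound at `μ`. The half-plane bound confines `σ(1 - T)` to `Re z ≥ 0`, and on
the sector `|arg λ| < π/2 - ε` one has `Re λ ≥ sin ε · ‖λ‖`, so `‖λ (λ + 1 - T)⁻¹‖ ≤ c / sin ε`.
-/

open Real

/-- A bounded operator `V` is sectorial of type `ω ∈ [0, π)` if its spectrum lies in the
closed sector of half-angle `ω` and `‖λ(λ+V)⁻¹‖` is uniformly bounded on each sector
`|Arg λ| < π - ω - ε`. -/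
def IsSectorialOfType {X : Type*} [NormedAddCommGroup X] [NormedSpace ℂ X]
    [CompleteSpace X] (V : X →L[ℂ] X) (ω : ℝ) : Prop :=
  (∀ z ∈ spectrum ℂ V, z = 0 ∨ |z.arg| ≤ ω) ∧
  ∀ ε ∈ Set.Ioo 0 (π - ω), ∃ M : ℝ, ∀ lam : ℂ, lam ≠ 0 → |lam.arg| < π - ω - ε →
    IsUnit (algebraMap ℂ (X →L[ℂ] X) lam + V) ∧
    ‖lam • Ring.inverse (algebraMap ℂ (X →L[ℂ] X) lam + V)‖ ≤ M

section ResolventBounds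

variable {A : Type*} [NormedRing A] [NormedAlgebra ℂ A]

def KreissCondition (T : A) (c : ℝ) : Prop :=
  ∀ lam : ℂ, 1 < ‖lam‖ →
    IsUnit (algebraMap ℂ A lam - T) ∧ ‖Ring.inverse (algebraMap ℂ A lam - T)‖ ≤ c * (‖lam‖ - 1)⁻¹

def HalfPlaneResolventBound (V : A) (c : ℝ) : Prop :=
  ∀ μ : ℂ, 0 < μ.re →
    IsUnit (algebraMap ℂ A μ + V) ∧ ‖Ring.inverse (algebraMap ℂ A μ + V)‖ ≤ c * μ.re⁻¹

theorem Complex.re_le_norm_add_one_sub_one (μ : ℂ) : μ.re ≤ ‖μ + 1‖ - 1 := by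
  have := Complex.re_le_norm (μ + 1)
  simp only [Complex.add_re, Complex.one_re] at this
  linarith

theorem KreissCondition.halfPlaneResolventBound {T : A} {c : ℝ} (hK : KreissCondition T c) :
    HalfPlaneResolventBound (1 - T) c := by
  intro μ hμ
  have hre := μ.re_le_norm_add_one_sub_one
  have hshift : algebraMap ℂ A μ + (1 - T) = algebraMap ℂ A (μ + 1) - T := by
    rw [map_add, map_one, add_sub_assoc]
  obtain ⟨hunit, hbound⟩ := hK (μ + 1) (by linarith)
  have hc : 0 ≤ c :=
    nonneg_of_mul_nonneg_left ((norm_nonneg _).trans hbound) (inv_pos.mpr (by linarith))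
  rw [hshift]
  refine ⟨hunit, hbound.trans (mul_le_mul_of_nonneg_left ?_ hc)⟩
  exact inv_anti₀ hμ hre

theorem HalfPlaneResolventBound.nonneg {V : A} {c : ℝ} (hV : HalfPlaneResolventBound V c) :
    0 ≤ c := by
  simpa using (norm_nonneg _).trans (hV 1 one_pos).2

theorem HalfPlaneResolventBound.re_nonneg_of_mem_spectrum {V : A} {c : ℝ}
    (hV : HalfPlaneResolventBound V c) {z : ℂ} (hz : z ∈ spectrum ℂ V) : 0 ≤ z.re := by
  by_contra! hneg
  have hunit := (hV (-z) (by simpa using hneg)).1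
  rw [map_neg, neg_add_eq_sub, ← neg_sub, IsUnit.neg_iff] at hunit
  exact spectrum.mem_iff.mp hz hunit

theorem Complex.sin_mul_norm_le_re {lam : ℂ} {ε : ℝ} (hε : 0 < ε)
    (harg : |lam.arg| < π / 2 - ε) : Real.sin ε * ‖lam‖ ≤ lam.re := by
  have hcos : Real.sin ε ≤ Real.cos lam.arg := by
    rw [← Real.cos_abs, ← Real.cos_pi_div_two_sub]
    exact Real.cos_le_cos_of_nonneg_of_le_pi (abs_nonneg _) (by linarith [pi_pos]) harg.le
  rw [← lam.norm_mul_cos_arg, mul_comm]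
  exact mul_le_mul_of_nonneg_left hcos (norm_nonneg _)

theorem HalfPlaneResolventBound.norm_smul_inverse_le {V : A} {c : ℝ}
    (hV : HalfPlaneResolventBound V c) {ε : ℝ} (hε : 0 < ε) (hεπ : ε < π / 2) {lam : ℂ}
    (hlam : lam ≠ 0) (harg : |lam.arg| < π / 2 - ε) :
    ‖lam • Ring.inverse (algebraMap ℂ A lam + V)‖ ≤ c / Real.sin ε := by
  have hsin : 0 < Real.sin ε := Real.sin_pos_of_pos_of_lt_pi hε (by linarith [pi_pos])
  have hsector := Complex.sin_mul_norm_le_re hε harg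
  have hnorm : 0 < ‖lam‖ := norm_pos_iff.mpr hlam
  have hre : 0 < lam.re := (mul_pos hsin hnorm).trans_le hsector
  calc ‖lam • Ring.inverse (algebraMap ℂ A lam + V)‖
      ≤ ‖lam‖ * (c * lam.re⁻¹) := by
        rw [norm_smul]
        exact mul_le_mul_of_nonneg_left (hV lam hre).2 hnorm.le
    _ = c * (lam.re / ‖lam‖)⁻¹ := by field_simp
    _ ≤ c / Real.sin ε := by
        rw [div_eq_mul_inv c]
        refine mul_le_mul_of_nonneg_left (inv_anti₀ hsin ?_) hV.nonneg
        rwa [le_div_iff₀ hnorm]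

end ResolventBounds

theorem HalfPlaneResolventBound.isSectorialOfType_pi_div_two {X : Type*} [NormedAddCommGroup X]
    [NormedSpace ℂ X] [CompleteSpace X] {V : X →L[ℂ] X} {c : ℝ}
    (hV : HalfPlaneResolventBound V c) : IsSectorialOfType V (π / 2) := by
  refine ⟨fun z hz => Or.inr (Complex.abs_arg_le_pi_div_two_iff.mpr
    (hV.re_nonneg_of_mem_spectrum hz)), fun ε hε => ⟨c / Real.sin ε, fun lam hlam harg => ?_⟩⟩
  have hεπ : ε < π / 2 := by linarith [hε.2]
  have harg' : |lam.arg| < π / 2 - ε := by linarith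
  have hre : 0 < lam.re :=
    (Complex.abs_arg_lt_pi_div_two_iff.mp (by linarith [hε.1])).resolve_right hlam
  exact ⟨(hV lam hre).1, hV.norm_smul_inverse_le hε.1 hεπ hlam harg'⟩

/-- if `T` satisfies the Kreiss resolvent condition
`‖(λ-T)⁻¹‖ ≤ c(|λ|-1)⁻¹` for `|λ| > 1`, then
`‖(μ + (1-T))⁻¹‖ ≤ c (Re μ)⁻¹` for `Re μ > 0`; in particular `1 - T` is sectorial of
type `π/2`. -/
theorem kreiss_implies_halfplane_bound
    {X : Type*} [NormedAddCommGroup X] [NormedSpace ℂ X] [CompleteSpace X]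
    (T : X →L[ℂ] X) (c : ℝ)
    (hK : ∀ lam : ℂ, 1 < ‖lam‖ →
      IsUnit (algebraMap ℂ (X →L[ℂ] X) lam - T) ∧
      ‖Ring.inverse (algebraMap ℂ (X →L[ℂ] X) lam - T)‖ ≤ c * (‖lam‖ - 1)⁻¹) :
    (∀ μ : ℂ, 0 < μ.re →
      IsUnit (algebraMap ℂ (X →L[ℂ] X) μ + (1 - T)) ∧
      ‖Ring.inverse (algebraMap ℂ (X →L[ℂ] X) μ + (1 - T))‖ ≤ c * (μ.re)⁻¹) ∧
    IsSectorialOfType (1 - T) (π / 2) := by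
  have hV : HalfPlaneResolventBound (1 - T) c := KreissCondition.halfPlaneResolventBound hK
  exact ⟨hV, hV.isSectorialOfType_pi_div_two⟩
end

section
/- Let F be an aperiodic probability on ℤ with finite second moment ∑_k k² F(k) < ∞ and mean a := ∑_k k F(k). Then there exist β ∈ (0,1) and b > 0 such that the element F_β := β^{-1}(F - (1-β)δ₀) of ℓ¹(ℤ) satisfies |F̂_β(ξ)| ≤ 1 - bξ² for all ξ ∈ [-π,π]. -/
/-!
For weights `p ≥ 0` of total mass one and vectors `uₖ` in the unit ball, `1 - ‖∑ pₖ uₖ‖²`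
dominates every `pᵢ pⱼ (1 - ⟪uᵢ, uⱼ⟫)`. With `uₖ = e^{-ikξ}` this gives
`1 - |F̂(ξ)|² ≥ F(k) F(j) (1 - cos ((k - j) ξ))`: a single pair `k ≠ j` in the support gives a
lower bound of order `ξ²` near `0`, and aperiodicity forces `|F̂| < 1` on `0 < |ξ| ≤ π`, so by
compactness `1 - |F̂(ξ)|² ≥ c ξ²` on `[-π, π]`. The second moment gives `1 - Re F̂(ξ) ≤ M ξ²`, and
`|F̂ - (1 - β)|² = β² - (1 - |F̂|²) + 2 (1 - β) (1 - Re F̂)`; once `4 (1 - β) M ≤ c` the loss `c ξ²`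
outweighs the gain `2 (1 - β) M ξ²`, whence `|F̂_β(ξ)| ≤ 1 - c ξ² / 4`.
-/

open Real

/-- The `ℤ`-Fourier transform of a summable function on `ℤ`:
`F̂(ξ) = ∑_{k∈ℤ} F(k) e^{-ikξ}`. -/
noncomputable def zFourierFn (F : ℤ → ℝ) (ξ : ℝ) : ℂ :=
  ∑' k : ℤ, (F k : ℂ) * Complex.exp (-Complex.I * k * ξ)

section

variable {ι E : Type*} [NormedAddCommGroup E] [InnerProductSpace ℝ E]
  {p : ι → ℝ} {u : ι → E} {S : E}

lemma hasSum_mul_one_sub_inner (hp1 : HasSum p 1) (hS : HasSum (fun i => p i • u i) S) (v : E) :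
    HasSum (fun i => p i * (1 - inner ℝ v (u i))) (1 - inner ℝ v S) := by
  have hv := hS.mapL (innerSL ℝ v)
  simp only [innerSL_apply_apply, inner_smul_right] at hv
  simpa only [mul_one_sub] using hp1.sub hv

lemma inner_le_one_of_hasSum (hp : ∀ i, 0 ≤ p i) (hp1 : HasSum p 1) (hu : ∀ i, ‖u i‖ ≤ 1)
    (hS : HasSum (fun i => p i • u i) S) {v : E} (hv : ‖v‖ ≤ 1) : inner ℝ v S ≤ 1 :=
  sub_nonneg.mp <| (hasSum_mul_one_sub_inner hp1 hS v).nonneg fun i =>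
    mul_nonneg (hp i) <| sub_nonneg.mpr <| (real_inner_le_norm _ _).trans <|
      mul_le_one₀ hv (norm_nonneg _) (hu i)

theorem mul_mul_one_sub_inner_le_one_sub_norm_sq (hp : ∀ i, 0 ≤ p i) (hp1 : HasSum p 1)
    (hu : ∀ i, ‖u i‖ ≤ 1) (hS : HasSum (fun i => p i • u i) S) (i j : ι) :
    p i * p j * (1 - inner ℝ (u i) (u j)) ≤ 1 - ‖S‖ ^ 2 := by
  have hpair : p j * (1 - inner ℝ (u i) (u j)) ≤ 1 - inner ℝ (u i) S :=
    le_hasSum (hasSum_mul_one_sub_inner hp1 hS (u i)) j fun k _ =>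
      mul_nonneg (hp k) <| sub_nonneg.mpr <| (real_inner_le_norm _ _).trans <|
        mul_le_one₀ (hu i) (norm_nonneg _) (hu k)
  have hself : p i * (1 - inner ℝ S (u i)) ≤ 1 - ‖S‖ ^ 2 := by
    rw [← real_inner_self_eq_norm_sq]
    refine le_hasSum (hasSum_mul_one_sub_inner hp1 hS S) i fun k _ => mul_nonneg (hp k) ?_
    rw [real_inner_comm]
    exact sub_nonneg.mpr (inner_le_one_of_hasSum hp hp1 hu hS (hu k))
  rw [real_inner_comm] at hself
  rw [mul_assoc]
  exact (mul_le_mul_of_nonneg_left hpair (hp i)).trans hself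

end

lemma exists_ne_zero_mem_of_closure_eq_top {S : Set ℤ} (hS : AddSubgroup.closure S = ⊤) :
    ∃ d ∈ S, d ≠ 0 := by
  by_contra! h
  exact top_ne_bot (hS.symm.trans (AddSubgroup.closure_eq_bot_iff.mpr h))

lemma cos_eq_one_of_closure_eq_top {S : Set ℤ} (hS : AddSubgroup.closure S = ⊤) {ξ : ℝ}
    (h : ∀ d ∈ S, cos (d * ξ) = 1) : cos ξ = 1 := by
  let periods : AddSubgroup ℤ := (AddSubgroup.zmultiples (2 * π)).comap (zmultiplesHom ℝ ξ)
  have hmem (d : ℤ) : d ∈ periods ↔ cos (d * ξ) = 1 := by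
    simp [periods, AddSubgroup.mem_zmultiples_iff, cos_eq_one_iff, zsmul_eq_mul]
  have hle : AddSubgroup.closure S ≤ periods :=
    (AddSubgroup.closure_le periods).mpr fun d hd => (hmem d).mpr (h d hd)
  have h1 : (1 : ℤ) ∈ AddSubgroup.closure S := hS ▸ AddSubgroup.mem_top 1
  simpa using (hmem 1).mp (hle h1)

lemma two_div_pi_sq_mul_sq_le_one_sub_cos_int_mul {d : ℤ} (hd : d ≠ 0) {ξ : ℝ}
    (h : |d * ξ| ≤ π) : 2 / π ^ 2 * ξ ^ 2 ≤ 1 - cos (d * ξ) := by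
  have hd2 : (1 : ℝ) ≤ (d : ℝ) ^ 2 :=
    (one_le_sq_iff_one_le_abs _).mpr (by exact_mod_cast Int.one_le_abs hd)
  calc 2 / π ^ 2 * ξ ^ 2 ≤ 2 / π ^ 2 * (d * ξ) ^ 2 := by
        rw [mul_pow]
        gcongr
        exact le_mul_of_one_le_left (sq_nonneg ξ) hd2
    _ ≤ 1 - cos (d * ξ) := by linarith [cos_le_one_sub_mul_cos_sq h]

theorem exists_pos_mul_sq_le_of_forall_pos {g : ℝ → ℝ} {R δ c₀ : ℝ} (hg : Continuous g)
    (hR : 0 < R) (hδ : 0 < δ) (hc₀ : 0 < c₀) (hnear : ∀ ξ, |ξ| ≤ δ → c₀ * ξ ^ 2 ≤ g ξ)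
    (hpos : ∀ ξ ∈ Set.Icc (-R) R, ξ ≠ 0 → 0 < g ξ) :
    ∃ c > 0, ∀ ξ ∈ Set.Icc (-R) R, c * ξ ^ 2 ≤ g ξ := by
  obtain ⟨ε, hε, hfar⟩ : ∃ ε > 0, ∀ ξ ∈ Set.Icc (-R) R ∩ {ξ | δ ≤ |ξ|}, ε ≤ g ξ :=
    (isCompact_Icc.inter_right (isClosed_le continuous_const continuous_abs)).exists_forall_le'
      hg.continuousOn fun ξ hξ => hpos ξ hξ.1 fun h0 => hδ.not_ge (by simpa [h0] using hξ.2)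
  refine ⟨min c₀ (ε / R ^ 2), by positivity, fun ξ hξ => ?_⟩
  rcases le_or_gt |ξ| δ with hξδ | hξδ
  · exact (mul_le_mul_of_nonneg_right (min_le_left _ _) (sq_nonneg ξ)).trans (hnear ξ hξδ)
  · calc min c₀ (ε / R ^ 2) * ξ ^ 2 ≤ ε / R ^ 2 * R ^ 2 :=
          mul_le_mul (min_le_right _ _) (sq_le_sq' hξ.1 hξ.2) (sq_nonneg ξ) (by positivity)
      _ = ε := div_mul_cancel₀ _ (by positivity)
      _ ≤ g ξ := hfar ξ ⟨hξ, hξδ.le⟩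

theorem norm_ofReal_inv_mul_sub_one_sub_le (z : ℂ) {β c M x : ℝ} (hβ : β ∈ Set.Ioo 0 1)
    (hc : 0 ≤ c) (hx : 0 ≤ x) (hlow : c * x ≤ 1 - ‖z‖ ^ 2) (hup : 1 - z.re ≤ M * x)
    (hβM : 4 * (1 - β) * M ≤ c) :
    ‖((β⁻¹ : ℝ) : ℂ) * (z - ((1 - β : ℝ) : ℂ))‖ ≤ 1 - c / 4 * x := by
  obtain ⟨hβ0, hβ1⟩ := hβ
  set w := z - ((1 - β : ℝ) : ℂ)
  have hw : ‖w‖ ^ 2 = β ^ 2 - (1 - ‖z‖ ^ 2) + 2 * (1 - β) * (1 - z.re) := by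
    rw [Complex.sq_norm, Complex.sq_norm, Complex.normSq_apply, Complex.normSq_apply]
    simp only [w, Complex.sub_re, Complex.sub_im, Complex.ofReal_re, Complex.ofReal_im]
    ring
  have hcx : 0 ≤ c * x := mul_nonneg hc hx
  have hwβ : ‖w‖ ^ 2 ≤ (β * (1 - c / 4 * x)) ^ 2 := by
    have hMx : 2 * (1 - β) * (1 - z.re) ≤ c / 2 * x := by
      nlinarith [mul_le_mul_of_nonneg_left hup (by linarith : (0 : ℝ) ≤ 2 * (1 - β))]
    have hβ2 : 0 ≤ (1 - β ^ 2) * (c * x) := mul_nonneg (by nlinarith) hcx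
    nlinarith [sq_nonneg (β * c * x)]
  have hrhs : 0 ≤ 1 - c / 4 * x := by nlinarith [sq_nonneg ‖z‖]
  rw [norm_mul, Complex.norm_real, norm_inv, Real.norm_of_nonneg hβ0.le, inv_mul_le_iff₀ hβ0]
  exact (pow_le_pow_iff_left₀ (norm_nonneg w) (by positivity) two_ne_zero).mp hwβ

lemma exp_neg_I_mul_int_mul (k : ℤ) (ξ : ℝ) :
    Complex.exp (-Complex.I * k * ξ) = Complex.exp (↑(-(k * ξ)) * Complex.I) := by
  push_cast; ring_nf

lemma norm_exp_neg_I_mul_int_mul (k : ℤ) (ξ : ℝ) : ‖Complex.exp (-Complex.I * k * ξ)‖ = 1 := by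
  rw [exp_neg_I_mul_int_mul, Complex.norm_exp_ofReal_mul_I]

lemma re_exp_neg_I_mul_int_mul (k : ℤ) (ξ : ℝ) :
    (Complex.exp (-Complex.I * k * ξ)).re = cos (k * ξ) := by
  rw [exp_neg_I_mul_int_mul, Complex.exp_ofReal_mul_I_re, cos_neg]

lemma inner_exp_neg_I_mul_int_mul (k j : ℤ) (ξ : ℝ) :
    inner ℝ (Complex.exp (-Complex.I * k * ξ)) (Complex.exp (-Complex.I * j * ξ)) =
      cos ((k - j) * ξ) := by
  have harg : -Complex.I * j * ξ + (starRingEnd ℂ) (-Complex.I * k * ξ) =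
      ((k - j) * ξ : ℝ) * Complex.I := by
    simp only [map_mul, map_neg, Complex.conj_I, Complex.conj_ofReal, map_intCast]
    push_cast
    ring
  rw [Complex.inner, ← Complex.exp_conj, ← Complex.exp_add, harg, Complex.exp_ofReal_mul_I_re]

lemma hasSum_zFourierFn {F : ℤ → ℝ} (hF : Summable F) (ξ : ℝ) :
    HasSum (fun k : ℤ => F k • Complex.exp (-Complex.I * k * ξ)) (zFourierFn F ξ) := by
  simp only [Complex.real_smul]
  refine (Summable.of_norm_bounded hF.abs fun k => ?_).hasSum
  rw [norm_mul, norm_exp_neg_I_mul_int_mul, mul_one, Complex.norm_real, Real.norm_eq_abs]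

lemma continuous_zFourierFn {F : ℤ → ℝ} (hF : Summable F) : Continuous (zFourierFn F) :=
  continuous_tsum (fun k => by fun_prop) hF.abs fun k ξ => by
    rw [norm_mul, norm_exp_neg_I_mul_int_mul, mul_one, Complex.norm_real, Real.norm_eq_abs]

lemma zFourierFn_mul_sub_ite {F : ℤ → ℝ} (hF : Summable F) (a s ξ : ℝ) :
    zFourierFn (fun k => a * (F k - if k = 0 then s else 0)) ξ =
      (a : ℂ) * (zFourierFn F ξ - (s : ℂ)) := by
  have hδ : HasSum (fun k : ℤ => (if k = 0 then s else 0 : ℝ) • Complex.exp (-Complex.I * k * ξ))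
      (s : ℂ) := by
    convert hasSum_ite_eq (0 : ℤ) (s : ℂ) using 2 with k
    split_ifs with hk <;> simp [hk, Complex.real_smul]
  refine ((((hasSum_zFourierFn hF ξ).sub hδ).mul_left (a : ℂ)).congr_fun fun k => ?_).tsum_eq
  simp only [Complex.real_smul]
  push_cast
  ring

lemma one_sub_re_zFourierFn_le {F : ℤ → ℝ} (hpos : ∀ k, 0 ≤ F k) (hsum : HasSum F 1)
    (hmom : Summable fun k : ℤ => (k : ℝ) ^ 2 * F k) (ξ : ℝ) :
    1 - (zFourierFn F ξ).re ≤ (∑' k : ℤ, (k : ℝ) ^ 2 * F k) / 2 * ξ ^ 2 := by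
  have hre : HasSum (fun k : ℤ => F k * (1 - cos (k * ξ))) (1 - (zFourierFn F ξ).re) := by
    have h := Complex.hasSum_re (hasSum_zFourierFn hsum.summable ξ)
    simp only [Complex.smul_re, re_exp_neg_I_mul_int_mul, smul_eq_mul] at h
    simpa only [mul_one_sub] using hsum.sub h
  have hterm (k : ℤ) : F k * (1 - cos (k * ξ)) ≤ ξ ^ 2 / 2 * ((k : ℝ) ^ 2 * F k) := by
    have h := mul_le_mul_of_nonneg_left (sub_le_comm.mp (one_sub_sq_div_two_le_cos (x := k * ξ)))
      (hpos k)
    linarith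
  calc 1 - (zFourierFn F ξ).re ≤ ξ ^ 2 / 2 * ∑' k : ℤ, (k : ℝ) ^ 2 * F k :=
        hasSum_le hterm hre (hmom.hasSum.mul_left _)
    _ = (∑' k : ℤ, (k : ℝ) ^ 2 * F k) / 2 * ξ ^ 2 := by ring

lemma mul_mul_one_sub_cos_le_one_sub_norm_zFourierFn_sq {F : ℤ → ℝ} (hpos : ∀ k, 0 ≤ F k)
    (hsum : HasSum F 1) (ξ : ℝ) (k j : ℤ) :
    F k * F j * (1 - cos ((k - j) * ξ)) ≤ 1 - ‖zFourierFn F ξ‖ ^ 2 := by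
  rw [← inner_exp_neg_I_mul_int_mul]
  exact mul_mul_one_sub_inner_le_one_sub_norm_sq hpos hsum
    (fun k => (norm_exp_neg_I_mul_int_mul k ξ).le) (hasSum_zFourierFn hsum.summable ξ) k j

lemma one_sub_norm_zFourierFn_sq_pos {F : ℤ → ℝ} (hpos : ∀ k, 0 ≤ F k) (hsum : HasSum F 1)
    (haper : AddSubgroup.closure {d : ℤ | ∃ k k', F k ≠ 0 ∧ F k' ≠ 0 ∧ d = k - k'} = ⊤)
    {ξ : ℝ} (hξ₁ : -(2 * π) < ξ) (hξ₂ : ξ < 2 * π) (hξ : ξ ≠ 0) :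
    0 < 1 - ‖zFourierFn F ξ‖ ^ 2 := by
  by_contra! hle
  refine hξ ((cos_eq_one_iff_of_lt_of_lt hξ₁ hξ₂).mp (cos_eq_one_of_closure_eq_top haper ?_))
  rintro _ ⟨k, k', hk, hk', rfl⟩
  have hFF : 0 < F k * F k' := mul_pos ((hpos k).lt_of_ne' hk) ((hpos k').lt_of_ne' hk')
  have h := (mul_mul_one_sub_cos_le_one_sub_norm_zFourierFn_sq hpos hsum ξ k k').trans hle
  push_cast
  nlinarith [cos_le_one ((k - k') * ξ)]

theorem exists_pos_mul_sq_le_one_sub_norm_zFourierFn_sq {F : ℤ → ℝ} (hpos : ∀ k, 0 ≤ F k)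
    (hsum : HasSum F 1)
    (haper : AddSubgroup.closure {d : ℤ | ∃ k k', F k ≠ 0 ∧ F k' ≠ 0 ∧ d = k - k'} = ⊤) :
    ∃ c > 0, ∀ ξ ∈ Set.Icc (-π) π, c * ξ ^ 2 ≤ 1 - ‖zFourierFn F ξ‖ ^ 2 := by
  obtain ⟨_, ⟨k, j, hk, hj, rfl⟩, hkj⟩ := exists_ne_zero_mem_of_closure_eq_top haper
  have hd : 0 < |((k - j : ℤ) : ℝ)| := abs_pos.mpr (Int.cast_ne_zero.mpr hkj)
  have hFF : 0 < F k * F j := mul_pos ((hpos k).lt_of_ne' hk) ((hpos j).lt_of_ne' hj)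
  refine exists_pos_mul_sq_le_of_forall_pos (c₀ := 2 * (F k * F j) / π ^ 2)
    (continuous_const.sub ((continuous_zFourierFn hsum.summable).norm.pow 2)) pi_pos
    (div_pos pi_pos hd) (by positivity) (fun ξ hξ => ?_) fun ξ hξ hξ0 =>
      one_sub_norm_zFourierFn_sq_pos hpos hsum haper (by linarith [hξ.1, pi_pos])
        (by linarith [hξ.2, pi_pos]) hξ0
  have hdξ : |((k - j : ℤ) : ℝ) * ξ| ≤ π := by
    rw [abs_mul]
    exact (le_div_iff₀' hd).mp hξ
  calc 2 * (F k * F j) / π ^ 2 * ξ ^ 2 = F k * F j * (2 / π ^ 2 * ξ ^ 2) := by ring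
    _ ≤ F k * F j * (1 - cos ((k - j : ℤ) * ξ)) :=
      mul_le_mul_of_nonneg_left (two_div_pi_sq_mul_sq_le_one_sub_cos_int_mul hkj hdξ) hFF.le
    _ ≤ 1 - ‖zFourierFn F ξ‖ ^ 2 := by
      push_cast
      exact mul_mul_one_sub_cos_le_one_sub_norm_zFourierFn_sq hpos hsum ξ k j

/-- if `F` is an aperiodic probability on `ℤ` with finite second moment,
then there are `β ∈ (0,1)` and `b > 0` such that `F_β := β⁻¹(F - (1-β)δ₀)` satisfies
`|F̂_β(ξ)| ≤ 1 - bξ²` for all `ξ ∈ [-π,π]`. -/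
theorem aperiodic_second_moment_bound (F : ℤ → ℝ)
    (hpos : ∀ k, 0 ≤ F k) (hsum : HasSum F 1)
    (hmom : Summable fun k : ℤ => (k : ℝ) ^ 2 * F k)
    (haper : AddSubgroup.closure
      {d : ℤ | ∃ k k', F k ≠ 0 ∧ F k' ≠ 0 ∧ d = k - k'} = ⊤) :
    ∃ β ∈ Set.Ioo (0 : ℝ) 1, ∃ b > (0 : ℝ), ∀ ξ ∈ Set.Icc (-π) π,
      ‖zFourierFn
          (fun k => β⁻¹ * (F k - (if k = 0 then 1 - β else 0))) ξ‖ ≤ 1 - b * ξ ^ 2 := by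
  obtain ⟨c, hc, hlow⟩ := exists_pos_mul_sq_le_one_sub_norm_zFourierFn_sq hpos hsum haper
  set M := (∑' k : ℤ, (k : ℝ) ^ 2 * F k) / 2
  have hM : 0 ≤ M := div_nonneg (tsum_nonneg fun k => mul_nonneg (sq_nonneg _) (hpos k)) zero_le_two
  have hβ : 1 - c / (4 * (M + c)) ∈ Set.Ioo (0 : ℝ) 1 := by
    have hlt : c / (4 * (M + c)) < 1 := (div_lt_one (by positivity)).mpr (by linarith)
    exact ⟨by linarith, by linarith [show 0 < c / (4 * (M + c)) by positivity]⟩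
  have hβM : 4 * (1 - (1 - c / (4 * (M + c)))) * M ≤ c := by
    rw [sub_sub_cancel]
    field_simp
    nlinarith
  refine ⟨_, hβ, c / 4, by positivity, fun ξ hξ => ?_⟩
  rw [zFourierFn_mul_sub_ite hsum.summable]
  exact norm_ofReal_inv_mul_sub_one_sub_le _ hβ hc.le (sq_nonneg ξ) (hlow ξ hξ)
    (one_sub_re_zFourierFn_le hpos hsum hmom ξ) hβM
end
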